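/- arXiv:2210.15788 — 3 statements merged into one kernel-verified Lean document; each statement's English description precedes it below -/
import Mathlib

section
/- Let A be a commutative monoid and B a commutative ring. Let f : A → B be a polynomial map of degree ≤ n (n ≥ 0) and let g : A → B be an additive monoid homomorphism. Then the pointwise product f·g : A → B, x ↦ f(x)·g(x), is a polynomial map of degree ≤ n + 1. Moreover, if A is a commutative ring and both f and g are multiplicative, then f·g is multiplicative. -/
/-- Auxiliary inductive definition: `IsPolyDegAux n P` says that `P` is a polynomial map of
degree `≤ n - 1` (so `IsPolyDegAux 0 P` means `P = 0`, i.e. degree `≤ -1`). -/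
def IsPolyDegAux {A : Type*} [AddCommMonoid A] {B : Type*} [AddCommGroup B] :
    ℕ → (A → B) → Prop
  | 0 => fun P => ∀ x, P x = 0
  | n + 1 => fun P => ∀ x : A, IsPolyDegAux n (fun y => P (x + y) - P y)

/-- `P : A → B` is a polynomial map of degree `≤ n`, for an integer `n ≥ -1`. -/
def IsPolyMapOfDegLE {A : Type*} [AddCommMonoid A] {B : Type*} [AddCommGroup B]
    (n : ℤ) (P : A → B) : Prop :=
  IsPolyDegAux (n + 1).toNat P

/-- A map between commutative rings is multiplicative if it sends `1` to `1` and
products to products. -/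
def IsMultiplicativeMap {A : Type*} [CommRing A] {B : Type*} [CommRing B]
    (P : A → B) : Prop :=
  P 1 = 1 ∧ ∀ x y : A, P (x * y) = P x * P y

namespace IsPolyDegAux

variable {A : Type*} [AddCommMonoid A]

section AddCommGroup

variable {B : Type*} [AddCommGroup B]

theorem add {n : ℕ} {P Q : A → B} (hP : IsPolyDegAux n P) (hQ : IsPolyDegAux n Q) :
    IsPolyDegAux n (fun x => P x + Q x) := by
  induction n generalizing P Q with
  | zero => intro x; simp [hP x, hQ x]
  | succ n ih =>
    intro x
    convert ih (hP x) (hQ x) using 2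
    exact (sub_add_sub_comm _ _ _ _).symm

theorem comp_add_left {n : ℕ} {P : A → B} (hP : IsPolyDegAux n P) (a : A) :
    IsPolyDegAux n (fun y => P (a + y)) := by
  induction n generalizing P with
  | zero => exact fun x => hP (a + x)
  | succ n ih =>
    intro x
    convert ih (hP x) using 3
    rw [add_left_comm]

end AddCommGroup

variable {B : Type*} [Ring B]

theorem mul_const {n : ℕ} {P : A → B} (hP : IsPolyDegAux n P) (c : B) :
    IsPolyDegAux n (fun x => P x * c) := by
  induction n generalizing P with
  | zero => intro x; simp [hP x]
  | succ n ih =>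
    intro x
    convert ih (hP x) using 2
    rw [sub_mul]

/-- Since `g` is additive, `Δₓ(f g)(y) = f (x + y) g x + (Δₓ f)(y) g y`: a translate of `f` times
a constant, plus a term of lower degree handled by induction. -/
theorem mul_addMonoidHom {n : ℕ} {f : A → B} (hf : IsPolyDegAux n f) (g : A →+ B) :
    IsPolyDegAux (n + 1) (fun x => f x * g x) := by
  induction n generalizing f with
  | zero => intro x y; simp [hf (x + y), hf y]
  | succ n ih =>
    intro x
    convert ((hf.comp_add_left x).mul_const (g x)).add (ih (hf x)) using 2 with y
    simp only [map_add]
    noncomm_ring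

end IsPolyDegAux

theorem isPolyMapOfDegLE_natCast_iff {A : Type*} [AddCommMonoid A] {B : Type*} [AddCommGroup B]
    (n : ℕ) (P : A → B) : IsPolyMapOfDegLE (n : ℤ) P ↔ IsPolyDegAux (n + 1) P := by
  rw [IsPolyMapOfDegLE, Int.toNat_natCast_add_one]

theorem IsMultiplicativeMap.mul {A : Type*} [CommRing A] {B : Type*} [CommRing B] {f g : A → B}
    (hf : IsMultiplicativeMap f) (hg : IsMultiplicativeMap g) :
    IsMultiplicativeMap (fun x => f x * g x) :=
  ⟨by simp only [hf.1, hg.1, one_mul], fun x y => by simp only [hf.2, hg.2, mul_mul_mul_comm]⟩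

/-- If `f : A → B` is a polynomial map of degree `≤ n` (with `A` a commutative monoid and
`B` a commutative ring) and `g : A → B` is an additive monoid homomorphism, then the
pointwise product `x ↦ f x * g x` is a polynomial map of degree `≤ n + 1`.  Moreover, if
`A` is a commutative ring and both `f` and `g` are multiplicative, then the pointwise
product is multiplicative. -/
theorem isPolyMapOfDegLE_mul_addMonoidHom :
    (∀ (A : Type*) [AddCommMonoid A] (B : Type*) [CommRing B]
        (n : ℕ) (f : A → B) (g : A →+ B),
        IsPolyMapOfDegLE (n : ℤ) f →
        IsPolyMapOfDegLE ((n : ℤ) + 1) (fun x => f x * g x)) ∧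
    (∀ (A : Type*) [CommRing A] (B : Type*) [CommRing B]
        (n : ℕ) (f : A → B) (g : A →+ B),
        IsPolyMapOfDegLE (n : ℤ) f →
        IsMultiplicativeMap f → IsMultiplicativeMap (⇑g) →
        IsMultiplicativeMap (fun x => f x * g x)) := by
  refine ⟨fun A _ B _ n f g hf => ?_, fun A _ B _ n f g _ hf hg => hf.mul hg⟩
  rw [isPolyMapOfDegLE_natCast_iff] at hf
  rw [← Nat.cast_add_one, isPolyMapOfDegLE_natCast_iff]
  exact hf.mul_addMonoidHom g
end

section
/- Let k be a field of characteristic 0 and K/k a finite Galois extension with Galois group Γ = Gal(K/k). Let V be a finite-dimensional K-vector space equipped with a semilinear action ρ of Γ, and let B : V × V → K be a nondegenerate symmetric K-bilinear form which is Galois compatible, i.e. B(ρ_σ(v), ρ_σ(w)) = σ(B(v, w)) for all σ ∈ Γ and v, w ∈ V. Let V^Γ = {v ∈ V : ρ_σ(v) = v for all σ ∈ Γ}, a k-subspace of V. Then B(v, w) lies in k (i.e. in the image of k in K) for all v, w ∈ V^Γ, and the induced symmetric k-bilinear form on V^Γ is nondegenerate. -/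
/-!
Galois compatibility makes `B v w` fixed by `Γ` when `v` and `w` are, so it lies in `k`.
For nondegeneracy, given a fixed `v ≠ 0`, rescale some `w` so that `B v w = c` with
`Tr_{K/k} c = 1` (the trace of a separable extension is surjective). The orbit sum
`u = ∑ σ, ρ_σ w` is fixed, and `B v u = ∑ σ, σ (B v w) = Tr_{K/k} c = 1`.
-/

section OrbitSum

variable {G V : Type*} [Group G] [Fintype G] [AddCommGroup V]

def orbitSum (ρ : G → V → V) (v : V) : V := ∑ g, ρ g v

theorem apply_orbitSum (ρ : G → V → V) (hadd : ∀ g u v, ρ g (u + v) = ρ g u + ρ g v)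
    (hmul : ∀ g h v, ρ (g * h) v = ρ g (ρ h v)) (g : G) (v : V) :
    ρ g (orbitSum ρ v) = orbitSum ρ v := by
  rw [orbitSum, ← AddMonoidHom.mk'_apply (ρ g) (hadd g), map_sum]
  exact Fintype.sum_equiv (Equiv.mulLeft g) _ _ fun h ↦ by simp [hmul]

end OrbitSum

theorem bilin_orbitSum_of_fixed {k K V : Type*} [Field k] [Field K] [Algebra k K]
    [IsGalois k K] [FiniteDimensional k K] [AddCommGroup V] [Module K V]
    (ρ : (K ≃ₐ[k] K) → V → V) (B : V →ₗ[K] V →ₗ[K] K)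
    (hcompat : ∀ σ v w, B (ρ σ v) (ρ σ w) = σ (B v w))
    {v : V} (hv : ∀ σ, ρ σ v = v) (w : V) :
    B v (orbitSum ρ w) = algebraMap k K (Algebra.trace k K (B v w)) := by
  rw [trace_eq_sum_automorphisms, orbitSum, map_sum]
  exact Fintype.sum_congr _ _ fun σ ↦ by rw [← hcompat, hv]

theorem galois_descent_bilinear_fixed_general
    {k K : Type*} [Field k] [Field K] [Algebra k K]
    [IsGalois k K] [FiniteDimensional k K]
    {V : Type*} [AddCommGroup V] [Module K V]
    (ρ : (K ≃ₐ[k] K) → V → V)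
    (hadd : ∀ σ u v, ρ σ (u + v) = ρ σ u + ρ σ v)
    (hmul : ∀ σ τ v, ρ (σ * τ) v = ρ σ (ρ τ v))
    (B : V →ₗ[K] V →ₗ[K] K)
    (hnd : ∀ v : V, v ≠ 0 → ∃ w, B v w ≠ 0)
    (hcompat : ∀ σ v w, B (ρ σ v) (ρ σ w) = σ (B v w)) :
    (∀ v w : V, (∀ σ, ρ σ v = v) → (∀ σ, ρ σ w = w) →
        ∃ c : k, B v w = algebraMap k K c) ∧
    (∀ v : V, (∀ σ, ρ σ v = v) → v ≠ 0 →
        ∃ w : V, (∀ σ, ρ σ w = w) ∧ B v w ≠ 0) := by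
  refine ⟨fun v w hv hw ↦ ?_, fun v hv hv0 ↦ ?_⟩
  · obtain ⟨c, hc⟩ := (IsGalois.mem_range_algebraMap_iff_fixed (B v w)).mpr
      fun σ ↦ by rw [← hcompat, hv, hw]
    exact ⟨c, hc.symm⟩
  · obtain ⟨w, hw⟩ := hnd v hv0
    obtain ⟨c, hc⟩ := Algebra.trace_surjective k K 1
    refine ⟨orbitSum ρ ((c / B v w) • w), fun σ ↦ apply_orbitSum ρ hadd hmul σ _, ?_⟩
    rw [bilin_orbitSum_of_fixed ρ B hcompat hv, map_smul, smul_eq_mul, div_mul_cancel₀ c hw, hc,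
      map_one]
    exact one_ne_zero

/-- Let `k` be a field of characteristic `0`, `K/k` a finite Galois extension with Galois
group `Γ = Gal(K/k)`, `V` a finite-dimensional `K`-vector space with a semilinear action
`ρ` of `Γ`, and `B` a nondegenerate symmetric Galois-compatible `K`-bilinear form on `V`.
Then on the `k`-subspace `V^Γ` of `Γ`-fixed vectors, `B` takes values in (the image of)
`k`, and the induced symmetric `k`-bilinear form on `V^Γ` is nondegenerate. -/
theorem galois_descent_bilinear_fixed
    {k K : Type*} [Field k] [CharZero k] [Field K] [Algebra k K]
    [IsGalois k K] [FiniteDimensional k K]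
    {V : Type*} [AddCommGroup V] [Module K V] [FiniteDimensional K V]
    (ρ : (K ≃ₐ[k] K) → V → V)
    (hadd : ∀ σ u v, ρ σ (u + v) = ρ σ u + ρ σ v)
    (hsmul : ∀ σ (c : K) (v : V), ρ σ (c • v) = σ c • ρ σ v)
    (hmul : ∀ σ τ v, ρ (σ * τ) v = ρ σ (ρ τ v))
    (hone : ∀ v, ρ 1 v = v)
    (B : V →ₗ[K] V →ₗ[K] K)
    (hsymm : ∀ v w, B v w = B w v)
    (hnd : ∀ v : V, v ≠ 0 → ∃ w, B v w ≠ 0)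
    (hcompat : ∀ σ v w, B (ρ σ v) (ρ σ w) = σ (B v w)) :
    (∀ v w : V, (∀ σ, ρ σ v = v) → (∀ σ, ρ σ w = w) →
        ∃ c : k, B v w = algebraMap k K c) ∧
    (∀ v : V, (∀ σ, ρ σ v = v) → v ≠ 0 →
        ∃ w : V, (∀ σ, ρ σ w = w) ∧ B v w ≠ 0) :=
  galois_descent_bilinear_fixed_general ρ hadd hmul B hnd hcompat
end

section
/- Let k be a field of characteristic 0 and K/k a finite Galois extension with Galois group Γ = Gal(K/k). Let V be a finite-dimensional K-vector space equipped with a semilinear action ρ of Γ, and let B : V × V → K be a nondegenerate symmetric K-bilinear form which is Galois compatible, i.e. B(ρ_σ(v), ρ_σ(w)) = σ(B(v, w)) for all σ ∈ Γ and v, w ∈ V. Let V^Γ be the k-subspace of Γ-fixed vectors, with its induced k-valued symmetric bilinear form B₀ = B|_{V^Γ}. Then the natural K-linear map V^Γ ⊗_k K → V, v ⊗ λ ↦ λ • v, is an isomorphism of K-vector spaces, and it carries the base change of B₀ to K (the K-bilinear form with (v ⊗ λ, w ⊗ μ) ↦ λμ·B₀(v, w)) to the form B. In particular, every finite-dimensional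 nondegenerate Galois-compatible symmetric bilinear form over K arises, up to compatible isomorphism, as the base change of a nondegenerate symmetric bilinear form over k. -/
open scoped TensorProduct

/-- The `k`-subspace of fixed vectors of a semilinear Galois action. -/
def fixedSubmodule {k K V : Type*} [Field k] [Field K] [Algebra k K]
    [AddCommGroup V] [Module K V] [Module k V] [IsScalarTower k K V]
    (ρ : (K ≃ₐ[k] K) → V → V)
    (hadd : ∀ σ u v, ρ σ (u + v) = ρ σ u + ρ σ v)
    (hsmul : ∀ σ (c : K) (v : V), ρ σ (c • v) = σ c • ρ σ v) :
    Submodule k V where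
  carrier := {v | ∀ σ, ρ σ v = v}
  add_mem' := fun hu hv σ => by rw [hadd, hu σ, hv σ]
  zero_mem' := fun σ => by simpa using hsmul σ 0 0
  smul_mem' := fun c v hv σ => by
    rw [← algebraMap_smul K c v, hsmul, AlgEquiv.commutes, hv σ]

/-!
The averages `∑ σ, σ c • ρ σ v` are fixed vectors. Their images in `V ⧸ span K V^Γ` all vanish,
so by Dedekind's independence of characters the image of `v` itself vanishes: `V^Γ` spans `V`
over `K`. Averaging a `K`-linear relation `∑ gᵢ • vᵢ = 0` among `k`-independent fixed vectors
gives the `k`-linear relations `∑ Tr(c gᵢ) • vᵢ = 0`, so nondegeneracy of the trace form forces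
`gᵢ = 0`. Hence `K ⊗[k] V^Γ → V` is bijective, and it carries the base change of `B₀` to `B`
because `B` is `K`-bilinear.
-/

theorem map_sum_of_map_add {M N ι : Type*} [AddCommGroup M] [AddCommGroup N] {f : M → N}
    (hadd : ∀ x y, f (x + y) = f x + f y) (s : Finset ι) (v : ι → M) :
    f (∑ i ∈ s, v i) = ∑ i ∈ s, f (v i) :=
  map_sum (AddMonoidHom.mk' f hadd) v s

theorem AlgEquiv.eq_zero_of_forall_sum_smul_eq_zero {k K M : Type*} [Field k] [Field K]
    [Algebra k K] [Fintype (K ≃ₐ[k] K)] [AddCommGroup M] [Module K M]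
    {u : (K ≃ₐ[k] K) → M} (h : ∀ c : K, ∑ σ, σ c • u σ = 0) (σ : K ≃ₐ[k] K) : u σ = 0 := by
  rw [← Module.forall_dual_apply_eq_zero_iff K]
  intro φ
  have hli : LinearIndependent K fun σ : K ≃ₐ[k] K => (σ : K →ₐ[k] K).toLinearMap :=
    (linearIndependent_algHom_toLinearMap k K K).comp _ AlgEquiv.coe_toAlgHom_injective
  refine Fintype.linearIndependent_iff.mp hli (fun σ => φ (u σ)) (LinearMap.ext fun c => ?_) σ
  simpa [mul_comm] using congrArg φ (h c)

namespace fixedSubmodule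

variable {k K V : Type*} [Field k] [Field K] [Algebra k K] [FiniteDimensional k K]
    [AddCommGroup V] [Module K V] [Module k V] [IsScalarTower k K V]
    {ρ : (K ≃ₐ[k] K) → V → V}
    (hadd : ∀ σ u v, ρ σ (u + v) = ρ σ u + ρ σ v)
    (hsmul : ∀ σ (c : K) (v : V), ρ σ (c • v) = σ c • ρ σ v)

theorem sum_smul_mem (hmul : ∀ σ τ v, ρ (σ * τ) v = ρ σ (ρ τ v)) (c : K) (v : V) :
    ∑ σ, σ c • ρ σ v ∈ fixedSubmodule ρ hadd hsmul := by
  intro τ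
  rw [map_sum_of_map_add (hadd τ)]
  exact Fintype.sum_equiv (Equiv.mulLeft τ) _ _ fun σ => by
    rw [hsmul, Equiv.coe_mulLeft, AlgEquiv.mul_apply, hmul]

theorem span_eq_top (hmul : ∀ σ τ v, ρ (σ * τ) v = ρ σ (ρ τ v)) (hone : ∀ v, ρ 1 v = v) :
    Submodule.span K (fixedSubmodule ρ hadd hsmul : Set V) = ⊤ := by
  set U := Submodule.span K (fixedSubmodule ρ hadd hsmul : Set V)
  refine Submodule.eq_top_iff'.2 fun v => ?_
  have hrel : ∀ c : K, ∑ σ, σ c • U.mkQ (ρ σ v) = 0 := fun c => by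
    simp_rw [← map_smul, ← map_sum, Submodule.mkQ_apply, Submodule.Quotient.mk_eq_zero]
    exact Submodule.subset_span (sum_smul_mem hadd hsmul hmul c v)
  simpa [hone] using AlgEquiv.eq_zero_of_forall_sum_smul_eq_zero hrel 1

variable [IsGalois k K]

theorem sum_smul_smul_of_mem {w : V}
    (hw : w ∈ fixedSubmodule ρ hadd hsmul) (c a : K) :
    ∑ σ, σ c • ρ σ (a • w) = Algebra.trace k K (c * a) • w := by
  rw [← algebraMap_smul K (Algebra.trace k K (c * a)) w, trace_eq_sum_automorphisms,
    Finset.sum_smul]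
  refine Finset.sum_congr rfl fun σ _ => ?_
  rw [hsmul, hw σ, map_mul, mul_smul]

theorem linearIndependent_of_forall_mem {ι : Type*} {v : ι → V}
    (hv : ∀ i, v i ∈ fixedSubmodule ρ hadd hsmul) (hli : LinearIndependent k v) :
    LinearIndependent K v := by
  rw [linearIndependent_iff'] at hli ⊢
  intro s g hg i hi
  have htrace : ∀ c : K, ∑ j ∈ s, Algebra.trace k K (c * g j) • v j = 0 := fun c => by
    have hzero : ∑ σ, σ c • ρ σ (∑ j ∈ s, g j • v j) = 0 := by
      rw [hg]
      exact Finset.sum_eq_zero fun σ _ => by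
        rw [(fixedSubmodule ρ hadd hsmul).zero_mem σ, smul_zero]
    simp_rw [← hzero, map_sum_of_map_add (hadd _), Finset.smul_sum]
    rw [Finset.sum_comm]
    exact Finset.sum_congr rfl fun j _ => (sum_smul_smul_of_mem hadd hsmul (hv j) c (g j)).symm
  refine (traceForm_nondegenerate k K).1 (g i) fun c => ?_
  rw [Algebra.traceForm_apply, mul_comm]
  exact hli s _ (htrace c) i hi

theorem bijective_liftBaseChange_subtype (hmul : ∀ σ τ v, ρ (σ * τ) v = ρ σ (ρ τ v))
    (hone : ∀ v, ρ 1 v = v) :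
    Function.Bijective ((fixedSubmodule ρ hadd hsmul).subtype.liftBaseChange K) := by
  set W := fixedSubmodule ρ hadd hsmul
  let b := Module.Basis.ofVectorSpace k W
  constructor
  · refine LinearMap.injective_of_linearIndependent (b.baseChange K).span_eq ?_
    have hb : W.subtype.liftBaseChange K ∘ b.baseChange K = fun i => (b i : V) := by
      ext i
      simp
    rw [hb]
    exact linearIndependent_of_forall_mem hadd hsmul (fun i => (b i).2)
      (b.linearIndependent.map' W.subtype W.ker_subtype)
  · rw [← LinearMap.range_eq_top, eq_top_iff, ← span_eq_top hadd hsmul hmul hone,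
      Submodule.span_le]
    exact fun w hw => ⟨1 ⊗ₜ ⟨w, hw⟩, one_smul K w⟩

noncomputable def baseChangeEquiv (hmul : ∀ σ τ v, ρ (σ * τ) v = ρ σ (ρ τ v))
    (hone : ∀ v, ρ 1 v = v) :
    K ⊗[k] fixedSubmodule ρ hadd hsmul ≃ₗ[K] V :=
  .ofBijective _ (bijective_liftBaseChange_subtype hadd hsmul hmul hone)

theorem baseChangeEquiv_tmul (hmul : ∀ σ τ v, ρ (σ * τ) v = ρ σ (ρ τ v))
    (hone : ∀ v, ρ 1 v = v) (c : K) (v : fixedSubmodule ρ hadd hsmul) :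
    baseChangeEquiv hadd hsmul hmul hone (c ⊗ₜ v) = c • (v : V) :=
  rfl

end fixedSubmodule

theorem galois_descent_bilinear_baseChange_general
    {k K : Type*} [Field k] [Field K] [Algebra k K]
    [IsGalois k K] [FiniteDimensional k K]
    {V : Type*} [AddCommGroup V] [Module K V] [Module k V] [IsScalarTower k K V]
    (ρ : (K ≃ₐ[k] K) → V → V)
    (hadd : ∀ σ u v, ρ σ (u + v) = ρ σ u + ρ σ v)
    (hsmul : ∀ σ (c : K) (v : V), ρ σ (c • v) = σ c • ρ σ v)
    (hmul : ∀ σ τ v, ρ (σ * τ) v = ρ σ (ρ τ v))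
    (hone : ∀ v, ρ 1 v = v)
    (B : V →ₗ[K] V →ₗ[K] K) :
    ∃ e : (K ⊗[k] ↥(fixedSubmodule ρ hadd hsmul)) ≃ₗ[K] V,
      (∀ (c : K) (v : fixedSubmodule ρ hadd hsmul), e (c ⊗ₜ[k] v) = c • (v : V)) ∧
      ∀ (c d : K) (v w : fixedSubmodule ρ hadd hsmul),
        B (e (c ⊗ₜ[k] v)) (e (d ⊗ₜ[k] w)) = c * d * B (v : V) (w : V) := by
  refine ⟨fixedSubmodule.baseChangeEquiv hadd hsmul hmul hone,
    fixedSubmodule.baseChangeEquiv_tmul hadd hsmul hmul hone, fun c d v w => ?_⟩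
  simp only [fixedSubmodule.baseChangeEquiv_tmul, map_smul, LinearMap.smul_apply, smul_eq_mul]
  ring

/-- Galois descent for nondegenerate symmetric Galois-compatible bilinear forms: the
natural map `V^Γ ⊗_k K → V`, `v ⊗ λ ↦ λ • v`, is a `K`-linear isomorphism, carrying the
base change of the restricted `k`-bilinear form `B₀` on `V^Γ` to `B`. -/
theorem galois_descent_bilinear_baseChange
    {k K : Type*} [Field k] [CharZero k] [Field K] [Algebra k K]
    [IsGalois k K] [FiniteDimensional k K]
    {V : Type*} [AddCommGroup V] [Module K V] [Module k V] [IsScalarTower k K V]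
    [FiniteDimensional K V]
    (ρ : (K ≃ₐ[k] K) → V → V)
    (hadd : ∀ σ u v, ρ σ (u + v) = ρ σ u + ρ σ v)
    (hsmul : ∀ σ (c : K) (v : V), ρ σ (c • v) = σ c • ρ σ v)
    (hmul : ∀ σ τ v, ρ (σ * τ) v = ρ σ (ρ τ v))
    (hone : ∀ v, ρ 1 v = v)
    (B : V →ₗ[K] V →ₗ[K] K)
    (hsymm : ∀ v w, B v w = B w v)
    (hnd : ∀ v : V, v ≠ 0 → ∃ w, B v w ≠ 0)
    (hcompat : ∀ σ v w, B (ρ σ v) (ρ σ w) = σ (B v w)) :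
    ∃ e : (K ⊗[k] ↥(fixedSubmodule ρ hadd hsmul)) ≃ₗ[K] V,
      (∀ (c : K) (v : fixedSubmodule ρ hadd hsmul), e (c ⊗ₜ[k] v) = c • (v : V)) ∧
      ∀ (c d : K) (v w : fixedSubmodule ρ hadd hsmul),
        B (e (c ⊗ₜ[k] v)) (e (d ⊗ₜ[k] w)) = c * d * B (v : V) (w : V) :=
  galois_descent_bilinear_baseChange_general ρ hadd hsmul hmul hone B
end
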